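/- arXiv:2112.12975 — 10 statements merged into one kernel-verified Lean document; each statement's English description precedes it below -/
import Mathlib

section
/- Let π0, π1 : [0,1] → [0,1] be a proper binarized scoring rule. Then for all r, p with 0 ≤ r < p < 1, the ratio (π0(p) − π0(r)) / (π1(r) − π1(p)) is well defined (the denominator is nonzero) and satisfies r/(1−r) < (π0(p) − π0(r)) / (π1(r) − π1(p)) < p/(1−p). -/
open Filter Topology

theorem proper_ratio_below
    (pi0 pi1 : ℝ → ℝ)
    (hpi0 : ∀ r ∈ Set.Icc (0:ℝ) 1, pi0 r ∈ Set.Icc (0:ℝ) 1)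
    (hpi1 : ∀ r ∈ Set.Icc (0:ℝ) 1, pi1 r ∈ Set.Icc (0:ℝ) 1)
    (hproper : ∀ q ∈ Set.Icc (0:ℝ) 1, ∀ r ∈ Set.Icc (0:ℝ) 1, r ≠ q →
      (1 - q) * pi0 r + q * pi1 r < (1 - q) * pi0 q + q * pi1 q)
    : ∀ r p : ℝ, 0 ≤ r → r < p → p < 1 →
      pi1 r - pi1 p ≠ 0 ∧
      r / (1 - r) < (pi0 p - pi0 r) / (pi1 r - pi1 p) ∧
      (pi0 p - pi0 r) / (pi1 r - pi1 p) < p / (1 - p) := by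
  intro r p hr hrp hp1
  have hrI : r ∈ Set.Icc (0:ℝ) 1 := ⟨hr, by linarith⟩
  have hpI : p ∈ Set.Icc (0:ℝ) 1 := ⟨by linarith, by linarith⟩
  have h1 := hproper r hrI p hpI (by intro h; linarith [h ▸ hrp])
  have h2 := hproper p hpI r hrI (by intro h; linarith [h ▸ hrp])
  -- h1: (1-r) pi0 p + r pi1 p < (1-r) pi0 r + r pi1 r
  -- h2: (1-p) pi0 r + p pi1 r < (1-p) pi0 p + p pi1 p
  have hA : pi0 p - pi0 r < 0 := by nlinarith
  have hD : pi1 r - pi1 p < 0 := by nlinarith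
  refine ⟨ne_of_lt hD, ?_, ?_⟩
  · have : (pi0 p - pi0 r) / (pi1 r - pi1 p)
        = (-(pi0 p - pi0 r)) / (-(pi1 r - pi1 p)) := by
      rw [neg_div_neg_eq]
    rw [this, div_lt_div_iff₀ (by linarith) (by linarith)]
    nlinarith
  · have : (pi0 p - pi0 r) / (pi1 r - pi1 p)
        = (-(pi0 p - pi0 r)) / (-(pi1 r - pi1 p)) := by
      rw [neg_div_neg_eq]
    rw [this, div_lt_div_iff₀ (by linarith) (by linarith)]
    nlinarith
end

section
/- Let π0, π1 : [0,1] → [0,1] be a proper binarized scoring rule and let p ∈ (0,1). Then the difference quotient r ↦ (π0(p) − π0(r)) / (π1(r) − π1(p)) converges to p/(1−p) as r tends to p within [0,1] \ {p}; in particular both the left limit (r ↑ p) and the right limit (r ↓ p) equal p/(1−p). -/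
/-! Write `A = π₀(p) - π₀(r)` and `B = π₁(r) - π₁(p)`. Properness at belief `p` against the
report `r` gives `p B < (1 - p) A`, and at belief `r` against `p` gives `(1 - r) A < r B`.
Hence `A / B` lies between `p / (1 - p)` and `r / (1 - r)`, and the latter tends to
`p / (1 - p)` as `r → p`. -/

open Filter Topology Set

def IsProperBinarized (pi0 pi1 : ℝ → ℝ) : Prop :=
  ∀ q ∈ Icc (0:ℝ) 1, ∀ r ∈ Icc (0:ℝ) 1, r ≠ q →
    (1 - q) * pi0 r + q * pi1 r < (1 - q) * pi0 q + q * pi1 q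

theorem div_mem_uIcc_of_mul_lt_mul {a b c d A B : ℝ} (ha : 0 < a) (hc : 0 < c)
    (h₁ : b * B < a * A) (h₂ : c * A < d * B) : A / B ∈ uIcc (b / a) (d / c) := by
  rcases lt_trichotomy B 0 with hB | hB | hB
  · refine mem_uIcc.2 (Or.inr ⟨?_, ?_⟩)
    · rw [← neg_div_neg_eq A, div_le_div_iff₀ hc (neg_pos.2 hB)]; linarith
    · rw [← neg_div_neg_eq A, div_le_div_iff₀ (neg_pos.2 hB) ha]; linarith
  · subst hB
    nlinarith
  · refine mem_uIcc.2 (Or.inl ⟨?_, ?_⟩)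
    · rw [div_le_div_iff₀ ha hB]; linarith
    · rw [div_le_div_iff₀ hB hc]; linarith

theorem IsProperBinarized.ratio_mem_uIcc {pi0 pi1 : ℝ → ℝ} (h : IsProperBinarized pi0 pi1)
    {p r : ℝ} (hp : p ∈ Ico (0:ℝ) 1) (hr : r ∈ Ico (0:ℝ) 1) (hrp : r ≠ p) :
    (pi0 p - pi0 r) / (pi1 r - pi1 p) ∈ uIcc (p / (1 - p)) (r / (1 - r)) := by
  have hbelief_p := h p (Ico_subset_Icc_self hp) r (Ico_subset_Icc_self hr) hrp
  have hbelief_r := h r (Ico_subset_Icc_self hr) p (Ico_subset_Icc_self hp) hrp.symm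
  exact div_mem_uIcc_of_mul_lt_mul (sub_pos.2 hp.2) (sub_pos.2 hr.2)
    (by linarith) (by linarith)

theorem IsProperBinarized.tendsto_ratio {pi0 pi1 : ℝ → ℝ} (h : IsProperBinarized pi0 pi1)
    {p : ℝ} (hp : p ∈ Ico (0:ℝ) 1) :
    Tendsto (fun r => (pi0 p - pi0 r) / (pi1 r - pi1 p))
      (𝓝[Icc (0:ℝ) 1 \ {p}] p) (𝓝 (p / (1 - p))) := by
  have hodds : Tendsto (fun r => r / (1 - r)) (𝓝[Icc (0:ℝ) 1 \ {p}] p) (𝓝 (p / (1 - p))) :=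
    ((continuousAt_id.div (continuousAt_const.sub continuousAt_id)
      (sub_ne_zero.2 hp.2.ne')).tendsto).mono_left nhdsWithin_le_nhds
  have hmem : ∀ᶠ r in 𝓝[Icc (0:ℝ) 1 \ {p}] p, r ∈ Ico (0:ℝ) 1 ∧ r ≠ p := by
    filter_upwards [self_mem_nhdsWithin,
      (eventually_lt_nhds hp.2).filter_mono nhdsWithin_le_nhds] with r hr hr1
    exact ⟨⟨hr.1.1, hr1⟩, hr.2⟩
  have hbounds := eventually_of_mem hmem fun r hr => h.ratio_mem_uIcc hp hr.1 hr.2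
  refine tendsto_of_tendsto_of_tendsto_of_le_of_le' ?_ ?_
    (hbounds.mono fun r hr => hr.1) (hbounds.mono fun r hr => hr.2)
  · simpa only [min_self] using (tendsto_const_nhds (x := p / (1 - p))).min hodds
  · simpa only [max_self] using (tendsto_const_nhds (x := p / (1 - p))).max hodds

theorem proper_ratio_limit_general
    (pi0 pi1 : ℝ → ℝ)
    (hproper : ∀ q ∈ Set.Icc (0:ℝ) 1, ∀ r ∈ Set.Icc (0:ℝ) 1, r ≠ q →
      (1 - q) * pi0 r + q * pi1 r < (1 - q) * pi0 q + q * pi1 q)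
    (p : ℝ) (hp : p ∈ Set.Ioo (0:ℝ) 1)
    : Tendsto (fun r => (pi0 p - pi0 r) / (pi1 r - pi1 p))
        (𝓝[Set.Icc (0:ℝ) 1 \ {p}] p) (𝓝 (p / (1 - p))) ∧
      Tendsto (fun r => (pi0 p - pi0 r) / (pi1 r - pi1 p))
        (𝓝[Set.Ico (0:ℝ) p] p) (𝓝 (p / (1 - p))) ∧
      Tendsto (fun r => (pi0 p - pi0 r) / (pi1 r - pi1 p))
        (𝓝[Set.Ioc p 1] p) (𝓝 (p / (1 - p))) := by
  have hlim := IsProperBinarized.tendsto_ratio hproper (Ioo_subset_Ico_self hp)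
  refine ⟨hlim, hlim.mono_left (nhdsWithin_mono p ?_), hlim.mono_left (nhdsWithin_mono p ?_)⟩
  · exact fun r hr => ⟨⟨hr.1, hr.2.le.trans hp.2.le⟩, hr.2.ne⟩
  · exact fun r hr => ⟨⟨hp.1.le.trans hr.1.le, hr.2⟩, hr.1.ne'⟩

theorem proper_ratio_limit
    (pi0 pi1 : ℝ → ℝ)
    (hpi0 : ∀ r ∈ Set.Icc (0:ℝ) 1, pi0 r ∈ Set.Icc (0:ℝ) 1)
    (hpi1 : ∀ r ∈ Set.Icc (0:ℝ) 1, pi1 r ∈ Set.Icc (0:ℝ) 1)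
    (hproper : ∀ q ∈ Set.Icc (0:ℝ) 1, ∀ r ∈ Set.Icc (0:ℝ) 1, r ≠ q →
      (1 - q) * pi0 r + q * pi1 r < (1 - q) * pi0 q + q * pi1 q)
    (p : ℝ) (hp : p ∈ Set.Ioo (0:ℝ) 1)
    : Tendsto (fun r => (pi0 p - pi0 r) / (pi1 r - pi1 p))
        (𝓝[Set.Icc (0:ℝ) 1 \ {p}] p) (𝓝 (p / (1 - p))) ∧
      Tendsto (fun r => (pi0 p - pi0 r) / (pi1 r - pi1 p))
        (𝓝[Set.Ico (0:ℝ) p] p) (𝓝 (p / (1 - p))) ∧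
      Tendsto (fun r => (pi0 p - pi0 r) / (pi1 r - pi1 p))
        (𝓝[Set.Ioc p 1] p) (𝓝 (p / (1 - p))) :=
  proper_ratio_limit_general pi0 pi1 hproper p hp
end

section
/- Let π0, π1 : [0,1] → [0,1] be a proper binarized scoring rule, let the agent have actual belief μ ∈ (0,1) and state-dependent utilities with Δu0 > 0 and Δu1 > 0, and suppose the report p ∈ (0,1) is optimal for her (V(p) ≥ V(r) for all r ∈ [0,1]). Then the reported belief satisfies the identity p/(1−p) = (μ/(1−μ)) · (Δu1/Δu0). -/
/-!
Subtracting the constant `(1 - μ) u0(x̲) + μ u1(x̲)`, the agent's expected utility of a report `r` is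
`a π0(r) + b π1(r)` with `a = (1 - μ) Δu0` and `b = μ Δu1`, i.e. `(a + b)` times the expected score
of `r` under the belief `q = b / (a + b)`. Maximising it is therefore the same as maximising that
expected score, so by strict properness the optimal report is `q`, whose odds are `b / a`.
-/

open Set

section ScoringRule

variable (pi0 pi1 : ℝ → ℝ)

def expectedScore (q r : ℝ) : ℝ := (1 - q) * pi0 r + q * pi1 r

variable {pi0 pi1}

theorem eq_of_expectedScore_le
    (hproper : ∀ q ∈ Icc (0:ℝ) 1, ∀ r ∈ Icc (0:ℝ) 1, r ≠ q →
      expectedScore pi0 pi1 q r < expectedScore pi0 pi1 q q)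
    {q p : ℝ} (hq : q ∈ Icc (0:ℝ) 1) (hp : p ∈ Icc (0:ℝ) 1)
    (hle : expectedScore pi0 pi1 q q ≤ expectedScore pi0 pi1 q p) : p = q := by
  by_contra hne
  exact (hproper q hq p hp hne).not_ge hle

theorem mul_add_mul_eq_expectedScore {a b : ℝ} (hab : a + b ≠ 0) (r : ℝ) :
    a * pi0 r + b * pi1 r = (a + b) * expectedScore pi0 pi1 (b / (a + b)) r := by
  unfold expectedScore
  field_simp
  ring

end ScoringRule

theorem div_add_mem_Icc {a b : ℝ} (ha : 0 ≤ a) (hb : 0 < b) : b / (a + b) ∈ Icc (0:ℝ) 1 :=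
  ⟨by positivity, div_le_one_of_le₀ (by linarith) (by linarith)⟩

theorem div_add_div_one_sub_div_add {a b : ℝ} (hab : a + b ≠ 0) :
    b / (a + b) / (1 - b / (a + b)) = b / a := by
  rw [one_sub_div hab, add_sub_cancel_right, div_div_div_cancel_right₀ hab]

theorem expectedUtility_eq (μ u0l u0h u1l u1h x y : ℝ) :
    (1 - μ) * (x * u0h + (1 - x) * u0l) + μ * (y * u1h + (1 - y) * u1l) =
      ((1 - μ) * u0l + μ * u1l) + ((1 - μ) * (u0h - u0l) * x + μ * (u1h - u1l) * y) := by
  ring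

theorem optimal_report_identity_general
    (pi0 pi1 : ℝ → ℝ)
    (hproper : ∀ q ∈ Set.Icc (0:ℝ) 1, ∀ r ∈ Set.Icc (0:ℝ) 1, r ≠ q →
      (1 - q) * pi0 r + q * pi1 r < (1 - q) * pi0 q + q * pi1 q)
    (μ : ℝ) (hμ : μ ∈ Set.Ioo (0:ℝ) 1)
    (u0l u0h u1l u1h : ℝ) (hu0 : u0l < u0h) (hu1 : u1l < u1h)
    (p : ℝ) (hp : p ∈ Set.Ioo (0:ℝ) 1)
    (hopt : ∀ r ∈ Set.Icc (0:ℝ) 1,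
      (1 - μ) * (pi0 r * u0h + (1 - pi0 r) * u0l) + μ * (pi1 r * u1h + (1 - pi1 r) * u1l) ≤
      (1 - μ) * (pi0 p * u0h + (1 - pi0 p) * u0l) + μ * (pi1 p * u1h + (1 - pi1 p) * u1l))
    : p / (1 - p) = (μ / (1 - μ)) * ((u1h - u1l) / (u0h - u0l)) := by
  obtain ⟨hμ0, hμ1⟩ := hμ
  set a := (1 - μ) * (u0h - u0l)
  set b := μ * (u1h - u1l)
  have ha : 0 < a := mul_pos (by linarith) (by linarith)
  have hb : 0 < b := mul_pos hμ0 (by linarith)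
  have hq := div_add_mem_Icc ha.le hb
  have hpq : p = b / (a + b) := by
    refine eq_of_expectedScore_le hproper hq (Ioo_subset_Icc_self hp) ?_
    have hV := hopt _ hq
    rw [expectedUtility_eq, expectedUtility_eq, add_le_add_iff_left,
      mul_add_mul_eq_expectedScore (by positivity), mul_add_mul_eq_expectedScore (by positivity)]
      at hV
    exact le_of_mul_le_mul_left hV (by positivity)
  rw [hpq, div_add_div_one_sub_div_add (by positivity), div_mul_div_comm]

theorem optimal_report_identity
    (pi0 pi1 : ℝ → ℝ)
    (hpi0 : ∀ r ∈ Set.Icc (0:ℝ) 1, pi0 r ∈ Set.Icc (0:ℝ) 1)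
    (hpi1 : ∀ r ∈ Set.Icc (0:ℝ) 1, pi1 r ∈ Set.Icc (0:ℝ) 1)
    (hproper : ∀ q ∈ Set.Icc (0:ℝ) 1, ∀ r ∈ Set.Icc (0:ℝ) 1, r ≠ q →
      (1 - q) * pi0 r + q * pi1 r < (1 - q) * pi0 q + q * pi1 q)
    (μ : ℝ) (hμ : μ ∈ Set.Ioo (0:ℝ) 1)
    (u0l u0h u1l u1h : ℝ) (hu0 : u0l < u0h) (hu1 : u1l < u1h)
    (p : ℝ) (hp : p ∈ Set.Ioo (0:ℝ) 1)
    (hopt : ∀ r ∈ Set.Icc (0:ℝ) 1,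
      (1 - μ) * (pi0 r * u0h + (1 - pi0 r) * u0l) + μ * (pi1 r * u1h + (1 - pi1 r) * u1l) ≤
      (1 - μ) * (pi0 p * u0h + (1 - pi0 p) * u0l) + μ * (pi1 p * u1h + (1 - pi1 p) * u1l))
    : p / (1 - p) = (μ / (1 - μ)) * ((u1h - u1l) / (u0h - u0l)) :=
  optimal_report_identity_general pi0 pi1 hproper μ hμ u0l u0h u1l u1h hu0 hu1 p hp hopt
end

section
/- Let π0, π1 : [0,1] → [0,1] be a proper binarized scoring rule, let the agent have actual belief μ ∈ (0,1) and state-dependent utilities with Δu0 > 0 and Δu1 > 0, and suppose the report p ∈ (0,1) is optimal for her. Then the agent over-reports if and only if her utility is supermodular and under-reports if and only if it is submodular: p > μ ⟺ Δu1 > Δu0, p < μ ⟺ Δu1 < Δu0, and p = μ ⟺ Δu1 = Δu0. -/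
/-!
The expected utility of a report `r` is `a * π₀ r + b * π₁ r` up to a constant, with weights
`a = (1 - μ) Δu₀` and `b = μ Δu₁`. Dividing by `a + b`, the agent maximises the expected score of
a forecaster whose belief is `q = b / (a + b)`, so properness forces `p = q`. Finally
`(q - μ) (a + b) = μ (1 - μ) (Δu₁ - Δu₀)`, so `p - μ` has the sign of `Δu₁ - Δu₀`.
-/

open Filter Topology

open Set

def IsProperBinarizedRule (pi0 pi1 : ℝ → ℝ) : Prop :=
  ∀ q ∈ Icc (0 : ℝ) 1, ∀ r ∈ Icc (0 : ℝ) 1, r ≠ q →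
    (1 - q) * pi0 r + q * pi1 r < (1 - q) * pi0 q + q * pi1 q

namespace IsProperBinarizedRule

variable {pi0 pi1 : ℝ → ℝ}

theorem eq_of_isMaxOn (hproper : IsProperBinarizedRule pi0 pi1) {p q : ℝ}
    (hp : p ∈ Icc (0 : ℝ) 1) (hq : q ∈ Icc (0 : ℝ) 1)
    (hmax : IsMaxOn (fun r ↦ (1 - q) * pi0 r + q * pi1 r) (Icc 0 1) p) : p = q := by
  by_contra hne
  exact (hproper q hq p hp hne).not_ge (isMaxOn_iff.mp hmax q hq)

theorem eq_div_of_isMaxOn (hproper : IsProperBinarizedRule pi0 pi1) {a b p : ℝ}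
    (ha : 0 ≤ a) (hb : 0 ≤ b) (hab : 0 < a + b) (hp : p ∈ Icc (0 : ℝ) 1)
    (hmax : IsMaxOn (fun r ↦ a * pi0 r + b * pi1 r) (Icc 0 1) p) : p = b / (a + b) := by
  have hq : b / (a + b) ∈ Icc (0 : ℝ) 1 :=
    ⟨div_nonneg hb hab.le, (div_le_one hab).mpr (by linarith)⟩
  have hscore : (fun r ↦ (1 - b / (a + b)) * pi0 r + b / (a + b) * pi1 r) =
      fun r ↦ (a * pi0 r + b * pi1 r) / (a + b) := by
    ext r
    field_simp
    ring
  refine hproper.eq_of_isMaxOn hp hq ?_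
  rw [hscore]
  exact hmax.comp_mono fun _ _ h ↦ div_le_div_of_nonneg_right h hab.le

end IsProperBinarizedRule

theorem sign_agree_of_mul_eq_mul {x y c k : ℝ} (hc : 0 < c) (hk : 0 < k) (h : x * c = k * y) :
    (0 < x ↔ 0 < y) ∧ (x < 0 ↔ y < 0) ∧ (x = 0 ↔ y = 0) := by
  have hpos : ∀ {x y : ℝ}, x * c = k * y → (0 < x ↔ 0 < y) := fun hxy ↦ by
    rw [← mul_pos_iff_of_pos_right hc, hxy, mul_pos_iff_of_pos_left hk]
  refine ⟨hpos h, ?_, ?_⟩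
  · simpa only [neg_pos] using hpos (x := -x) (y := -y) (by rw [neg_mul, mul_neg, h])
  · rw [← mul_eq_zero_iff_right hc.ne', h, mul_eq_zero_iff_left hk.ne']

theorem misreport_iff_supermodular_general
    (pi0 pi1 : ℝ → ℝ)
    (hproper : ∀ q ∈ Set.Icc (0:ℝ) 1, ∀ r ∈ Set.Icc (0:ℝ) 1, r ≠ q →
      (1 - q) * pi0 r + q * pi1 r < (1 - q) * pi0 q + q * pi1 q)
    (μ : ℝ) (hμ : μ ∈ Set.Ioo (0:ℝ) 1)
    (u0l u0h u1l u1h : ℝ) (hu0 : u0l < u0h) (hu1 : u1l < u1h)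
    (p : ℝ) (hp : p ∈ Set.Ioo (0:ℝ) 1)
    (hopt : ∀ r ∈ Set.Icc (0:ℝ) 1,
      (1 - μ) * (pi0 r * u0h + (1 - pi0 r) * u0l) + μ * (pi1 r * u1h + (1 - pi1 r) * u1l) ≤
      (1 - μ) * (pi0 p * u0h + (1 - pi0 p) * u0l) + μ * (pi1 p * u1h + (1 - pi1 p) * u1l))
    : (p > μ ↔ u1h - u1l > u0h - u0l) ∧
      (p < μ ↔ u1h - u1l < u0h - u0l) ∧
      (p = μ ↔ u1h - u1l = u0h - u0l) := by
  obtain ⟨hμ0, hμ1⟩ := hμ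
  set a := (1 - μ) * (u0h - u0l)
  set b := μ * (u1h - u1l)
  have ha : 0 < a := mul_pos (by linarith) (by linarith)
  have hb : 0 < b := mul_pos hμ0 (by linarith)
  have hmax : IsMaxOn (fun r ↦ a * pi0 r + b * pi1 r) (Icc 0 1) p :=
    isMaxOn_iff.mpr fun r hr ↦ by linarith [hopt r hr]
  have hpq : p = b / (a + b) :=
    IsProperBinarizedRule.eq_div_of_isMaxOn hproper ha.le hb.le (by positivity)
      (Ioo_subset_Icc_self hp) hmax
  have hkey : (p - μ) * (a + b) = μ * (1 - μ) * ((u1h - u1l) - (u0h - u0l)) := by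
    rw [hpq]
    field_simp
    ring
  obtain ⟨hpos, hneg, hzero⟩ :=
    sign_agree_of_mul_eq_mul (by positivity) (mul_pos hμ0 (by linarith)) hkey
  exact ⟨sub_pos.symm.trans (hpos.trans sub_pos), sub_neg.symm.trans (hneg.trans sub_neg),
    sub_eq_zero.symm.trans (hzero.trans sub_eq_zero)⟩

theorem misreport_iff_supermodular
    (pi0 pi1 : ℝ → ℝ)
    (hpi0 : ∀ r ∈ Set.Icc (0:ℝ) 1, pi0 r ∈ Set.Icc (0:ℝ) 1)
    (hpi1 : ∀ r ∈ Set.Icc (0:ℝ) 1, pi1 r ∈ Set.Icc (0:ℝ) 1)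
    (hproper : ∀ q ∈ Set.Icc (0:ℝ) 1, ∀ r ∈ Set.Icc (0:ℝ) 1, r ≠ q →
      (1 - q) * pi0 r + q * pi1 r < (1 - q) * pi0 q + q * pi1 q)
    (μ : ℝ) (hμ : μ ∈ Set.Ioo (0:ℝ) 1)
    (u0l u0h u1l u1h : ℝ) (hu0 : u0l < u0h) (hu1 : u1l < u1h)
    (p : ℝ) (hp : p ∈ Set.Ioo (0:ℝ) 1)
    (hopt : ∀ r ∈ Set.Icc (0:ℝ) 1,
      (1 - μ) * (pi0 r * u0h + (1 - pi0 r) * u0l) + μ * (pi1 r * u1h + (1 - pi1 r) * u1l) ≤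
      (1 - μ) * (pi0 p * u0h + (1 - pi0 p) * u0l) + μ * (pi1 p * u1h + (1 - pi1 p) * u1l))
    : (p > μ ↔ u1h - u1l > u0h - u0l) ∧
      (p < μ ↔ u1h - u1l < u0h - u0l) ∧
      (p = μ ↔ u1h - u1l = u0h - u0l) :=
  misreport_iff_supermodular_general pi0 pi1 hproper μ hμ u0l u0h u1l u1h hu0 hu1 p hp hopt
end

section
/- Let the agent have actual belief μ ∈ (0,1), influenced belief μ̂ ∈ (0,1) with μ̂ > μ, and state-dependent utilities with Δu0 > 0 and Δu1 > 0. Then EU(A) > EU(B) if and only if Δu1 > Δu0; moreover EU(A) ≥ EU(B) if and only if Δu1 ≥ Δu0, and EU(A) = EU(B) if and only if Δu1 = Δu0. -/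
open Filter Topology

theorem lottery_choice_iff_supermodular
    (μ : ℝ) (hμ : μ ∈ Set.Ioo (0:ℝ) 1)
    (u0l u0h u1l u1h : ℝ) (hu0 : u0l < u0h) (hu1 : u1l < u1h)
    (ν : ℝ) (hν : ν ∈ Set.Ioo (0:ℝ) 1)
    (h : μ < ν)
    : (((1/2) * ((1 - μ) * u0l + μ * u1l) + (1/2) * ((1 - ν) * u0h + ν * u1h) > (1/2) * ((1 - μ) * u0h + μ * u1h) + (1/2) * ((1 - ν) * u0l + ν * u1l)) ↔ u1h - u1l > u0h - u0l) ∧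
      (((1/2) * ((1 - μ) * u0l + μ * u1l) + (1/2) * ((1 - ν) * u0h + ν * u1h) ≥ (1/2) * ((1 - μ) * u0h + μ * u1h) + (1/2) * ((1 - ν) * u0l + ν * u1l)) ↔ u1h - u1l ≥ u0h - u0l) ∧
      (((1/2) * ((1 - μ) * u0l + μ * u1l) + (1/2) * ((1 - ν) * u0h + ν * u1h) = (1/2) * ((1 - μ) * u0h + μ * u1h) + (1/2) * ((1 - ν) * u0l + ν * u1l)) ↔ u1h - u1l = u0h - u0l) := by

  have hd : 0 < ν - μ := by linarith
  have key : (1/2) * ((1 - μ) * u0l + μ * u1l) + (1/2) * ((1 - ν) * u0h + ν * u1h)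
      - ((1/2) * ((1 - μ) * u0h + μ * u1h) + (1/2) * ((1 - ν) * u0l + ν * u1l))
      = (1/2) * (ν - μ) * ((u1h - u1l) - (u0h - u0l)) := by ring
  refine ⟨⟨fun hgt => ?_, fun hgt => ?_⟩, ⟨fun hge => ?_, fun hge => ?_⟩, ⟨fun heq => ?_, fun heq => ?_⟩⟩
  · nlinarith
  · nlinarith
  · nlinarith
  · nlinarith
  · nlinarith
  · nlinarith
end

section
/- (Theorem 1, under-reporting direction.) Let π0, π1 : [0,1] → [0,1] be a proper binarized scoring rule, let the agent have actual belief μ ∈ (0,1), influenced belief μ̂ ∈ (0,1) with μ̂ > μ, and state-dependent utilities with Δu0 > 0 and Δu1 > 0, and suppose the report p ∈ (0,1) is optimal for her (V(p) ≥ V(r) for all r ∈ [0,1]). Then p < μ if and only if EU(A) < EU(B). -/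
open Filter Topology

theorem underreport_iff_hedging
    (pi0 pi1 : ℝ → ℝ)
    (hpi0 : ∀ r ∈ Set.Icc (0:ℝ) 1, pi0 r ∈ Set.Icc (0:ℝ) 1)
    (hpi1 : ∀ r ∈ Set.Icc (0:ℝ) 1, pi1 r ∈ Set.Icc (0:ℝ) 1)
    (hproper : ∀ q ∈ Set.Icc (0:ℝ) 1, ∀ r ∈ Set.Icc (0:ℝ) 1, r ≠ q →
      (1 - q) * pi0 r + q * pi1 r < (1 - q) * pi0 q + q * pi1 q)
    (μ : ℝ) (hμ : μ ∈ Set.Ioo (0:ℝ) 1)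
    (u0l u0h u1l u1h : ℝ) (hu0 : u0l < u0h) (hu1 : u1l < u1h)
    (ν : ℝ) (hν : ν ∈ Set.Ioo (0:ℝ) 1)
    (h : μ < ν)
    (p : ℝ) (hp : p ∈ Set.Ioo (0:ℝ) 1)
    (hopt : ∀ r ∈ Set.Icc (0:ℝ) 1,
      (1 - μ) * (pi0 r * u0h + (1 - pi0 r) * u0l) + μ * (pi1 r * u1h + (1 - pi1 r) * u1l) ≤
      (1 - μ) * (pi0 p * u0h + (1 - pi0 p) * u0l) + μ * (pi1 p * u1h + (1 - pi1 p) * u1l))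
    : p < μ ↔ (1/2) * ((1 - μ) * u0l + μ * u1l) + (1/2) * ((1 - ν) * u0h + ν * u1h) < (1/2) * ((1 - μ) * u0h + μ * u1h) + (1/2) * ((1 - ν) * u0l + ν * u1l) := by
  obtain ⟨hμ0, hμ1⟩ := hμ
  obtain ⟨hν0, hν1⟩ := hν
  obtain ⟨hp0, hp1⟩ := hp
  have hd0pos : (0:ℝ) < u0h - u0l := by linarith
  have hd1pos : (0:ℝ) < u1h - u1l := by linarith
  have hSpos : 0 < (1 - μ) * (u0h - u0l) + μ * (u1h - u1l) := by nlinarith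
  have hlam0 : 0 < μ * (u1h - u1l) / ((1 - μ) * (u0h - u0l) + μ * (u1h - u1l)) :=
    div_pos (by nlinarith) hSpos
  have hlam1 : μ * (u1h - u1l) / ((1 - μ) * (u0h - u0l) + μ * (u1h - u1l)) < 1 := by
    rw [div_lt_one hSpos]
    nlinarith
  set lam : ℝ := μ * (u1h - u1l) / ((1 - μ) * (u0h - u0l) + μ * (u1h - u1l)) with hlamdef
  have e1 : μ * (u1h - u1l) = lam * ((1 - μ) * (u0h - u0l) + μ * (u1h - u1l)) := by
    rw [hlamdef]; field_simp
  have e0 : (1 - μ) * (u0h - u0l) = (1 - lam) * ((1 - μ) * (u0h - u0l) + μ * (u1h - u1l)) := by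
    linarith [e1]
  have hpeq : p = lam := by
    by_contra hne
    have h1 := hopt lam ⟨le_of_lt hlam0, le_of_lt hlam1⟩
    have h2 := hproper lam ⟨le_of_lt hlam0, le_of_lt hlam1⟩ p
      ⟨le_of_lt hp0, le_of_lt hp1⟩ hne
    have hm := mul_lt_mul_of_pos_right h2 hSpos
    have g : ∀ x y : ℝ, ((1 - lam) * x + lam * y) * ((1 - μ) * (u0h - u0l) + μ * (u1h - u1l))
        = (1 - μ) * (u0h - u0l) * x + μ * (u1h - u1l) * y := by
      intro x y
      linear_combination (-x) * e0 + (-y) * e1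
    rw [g, g] at hm
    nlinarith [h1, hm]
  constructor
  · intro hlt
    rw [hpeq, hlamdef, div_lt_iff₀ hSpos] at hlt
    have hd : u1h - u1l < u0h - u0l := by nlinarith [mul_pos hμ0 (by linarith : (0:ℝ) < 1 - μ)]
    nlinarith [mul_pos (sub_pos.2 h) (sub_pos.2 hd)]
  · intro hrhs
    have hd : u1h - u1l < u0h - u0l := by
      by_contra hle
      push_neg at hle
      nlinarith [mul_nonneg (sub_pos.2 h).le (by linarith : (0:ℝ) ≤ (u1h - u1l) - (u0h - u0l))]
    rw [hpeq, hlamdef, div_lt_iff₀ hSpos]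
    nlinarith [mul_pos (mul_pos hμ0 (by linarith : (0:ℝ) < 1 - μ)) (sub_pos.2 hd)]
end

section
/- (Truthful reporting characterization.) Let π0, π1 : [0,1] → [0,1] be a proper binarized scoring rule, let the agent have actual belief μ ∈ (0,1), influenced belief μ̂ ∈ (0,1) with μ̂ > μ, and state-dependent utilities with Δu0 > 0 and Δu1 > 0, and suppose the report p ∈ (0,1) is optimal for her (V(p) ≥ V(r) for all r ∈ [0,1]). Then p = μ (no misreporting) if and only if EU(A) = EU(B) (the agent is indifferent between the two lotteries). -/
open Filter Topology

theorem truthful_iff_indifferent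
    (pi0 pi1 : ℝ → ℝ)
    (hpi0 : ∀ r ∈ Set.Icc (0:ℝ) 1, pi0 r ∈ Set.Icc (0:ℝ) 1)
    (hpi1 : ∀ r ∈ Set.Icc (0:ℝ) 1, pi1 r ∈ Set.Icc (0:ℝ) 1)
    (hproper : ∀ q ∈ Set.Icc (0:ℝ) 1, ∀ r ∈ Set.Icc (0:ℝ) 1, r ≠ q →
      (1 - q) * pi0 r + q * pi1 r < (1 - q) * pi0 q + q * pi1 q)
    (μ : ℝ) (hμ : μ ∈ Set.Ioo (0:ℝ) 1)
    (u0l u0h u1l u1h : ℝ) (hu0 : u0l < u0h) (hu1 : u1l < u1h)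
    (ν : ℝ) (hν : ν ∈ Set.Ioo (0:ℝ) 1)
    (h : μ < ν)
    (p : ℝ) (hp : p ∈ Set.Ioo (0:ℝ) 1)
    (hopt : ∀ r ∈ Set.Icc (0:ℝ) 1,
      (1 - μ) * (pi0 r * u0h + (1 - pi0 r) * u0l) + μ * (pi1 r * u1h + (1 - pi1 r) * u1l) ≤
      (1 - μ) * (pi0 p * u0h + (1 - pi0 p) * u0l) + μ * (pi1 p * u1h + (1 - pi1 p) * u1l))
    : p = μ ↔ (1/2) * ((1 - μ) * u0l + μ * u1l) + (1/2) * ((1 - ν) * u0h + ν * u1h) = (1/2) * ((1 - μ) * u0h + μ * u1h) + (1/2) * ((1 - ν) * u0l + ν * u1l) := by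
  obtain ⟨hμ0, hμ1⟩ := hμ
  obtain ⟨hp0, hp1⟩ := hp
  have hd0 : (0:ℝ) < u0h - u0l := by linarith
  have hd1 : (0:ℝ) < u1h - u1l := by linarith
  have hA : (0:ℝ) < (1 - μ) * (u0h - u0l) := mul_pos (by linarith) hd0
  have hB : (0:ℝ) < μ * (u1h - u1l) := mul_pos hμ0 hd1
  set S : ℝ := (1 - μ) * (u0h - u0l) + μ * (u1h - u1l) with hS_def
  have hS : 0 < S := by linarith
  set q : ℝ := μ * (u1h - u1l) / S with hq_def
  have hSq : S * q = μ * (u1h - u1l) := by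
    rw [hq_def]; field_simp
  have hq : q ∈ Set.Icc (0:ℝ) 1 := by
    constructor
    · exact le_of_lt (div_pos hB hS)
    · rw [hq_def, div_le_one hS]; linarith
  -- p equals the unique optimizer q
  have hpq : p = q := by
    by_contra hne
    have hpI : p ∈ Set.Icc (0:ℝ) 1 := ⟨le_of_lt hp0, le_of_lt hp1⟩
    have hP := hproper q hq p hpI hne
    have hO := hopt q hq
    have hP' : S * ((1 - q) * pi0 p + q * pi1 p) < S * ((1 - q) * pi0 q + q * pi1 q) :=
      mul_lt_mul_of_pos_left hP hS
    have hE1 : S * ((1 - q) * pi0 p + q * pi1 p)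
        = (1 - μ) * (u0h - u0l) * pi0 p + μ * (u1h - u1l) * pi1 p := by
      linear_combination (pi1 p - pi0 p) * hSq + pi0 p * hS_def
    have hE2 : S * ((1 - q) * pi0 q + q * pi1 q)
        = (1 - μ) * (u0h - u0l) * pi0 q + μ * (u1h - u1l) * pi1 q := by
      linear_combination (pi1 q - pi0 q) * hSq + pi0 q * hS_def
    rw [hE1, hE2] at hP'
    linarith
  rw [hpq]
  have key : q = μ ↔ u0h - u0l = u1h - u1l := by
    constructor
    · intro hqe
      have h1 : S * μ = μ * (u1h - u1l) := by have h1' := hSq; rw [hqe] at h1'; exact h1'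
      have h2 : μ * ((1 - μ) * ((u0h - u0l) - (u1h - u1l))) = 0 := by
        linear_combination h1 - μ * hS_def
      rcases mul_eq_zero.mp h2 with h3 | h3
      · exact absurd h3 (ne_of_gt hμ0)
      rcases mul_eq_zero.mp h3 with h4 | h4
      · linarith
      · linarith
    · intro hde
      rw [hq_def]
      rw [div_eq_iff (ne_of_gt hS)]
      linear_combination -(μ * (1 - μ)) * hde - μ * hS_def
  rw [key]
  constructor
  · intro hde
    linear_combination ((μ - ν)/2) * hde
  · intro heq
    have h5 : (ν - μ) * ((u1h - u1l) - (u0h - u0l)) = 0 := by linear_combination 2 * heq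
    rcases mul_eq_zero.mp h5 with h6 | h6
    · linarith
    · linarith
end

section
/- (Remark: decreasing influential action.) Let π0, π1 : [0,1] → [0,1] be a proper binarized scoring rule, let the agent have actual belief μ ∈ (0,1), influenced belief μ̂ ∈ (0,1) with μ̂ < μ (the influential action decreases the probability of θ1), and state-dependent utilities with Δu0 > 0 and Δu1 > 0, and suppose the report p ∈ (0,1) is optimal for her (V(p) ≥ V(r) for all r ∈ [0,1]). Then the preference ordering is reversed: p > μ if and only if EU(A) < EU(B), and p < μ if and only if EU(A) > EU(B). -/
open Filter Topology

theorem decreasing_action_reversed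
    (pi0 pi1 : ℝ → ℝ)
    (hpi0 : ∀ r ∈ Set.Icc (0:ℝ) 1, pi0 r ∈ Set.Icc (0:ℝ) 1)
    (hpi1 : ∀ r ∈ Set.Icc (0:ℝ) 1, pi1 r ∈ Set.Icc (0:ℝ) 1)
    (hproper : ∀ q ∈ Set.Icc (0:ℝ) 1, ∀ r ∈ Set.Icc (0:ℝ) 1, r ≠ q →
      (1 - q) * pi0 r + q * pi1 r < (1 - q) * pi0 q + q * pi1 q)
    (μ : ℝ) (hμ : μ ∈ Set.Ioo (0:ℝ) 1)
    (u0l u0h u1l u1h : ℝ) (hu0 : u0l < u0h) (hu1 : u1l < u1h)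
    (ν : ℝ) (hν : ν ∈ Set.Ioo (0:ℝ) 1)
    (h : ν < μ)
    (p : ℝ) (hp : p ∈ Set.Ioo (0:ℝ) 1)
    (hopt : ∀ r ∈ Set.Icc (0:ℝ) 1,
      (1 - μ) * (pi0 r * u0h + (1 - pi0 r) * u0l) + μ * (pi1 r * u1h + (1 - pi1 r) * u1l) ≤
      (1 - μ) * (pi0 p * u0h + (1 - pi0 p) * u0l) + μ * (pi1 p * u1h + (1 - pi1 p) * u1l))
    : (p > μ ↔ (1/2) * ((1 - μ) * u0l + μ * u1l) + (1/2) * ((1 - ν) * u0h + ν * u1h) < (1/2) * ((1 - μ) * u0h + μ * u1h) + (1/2) * ((1 - ν) * u0l + ν * u1l)) ∧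
      (p < μ ↔ (1/2) * ((1 - μ) * u0l + μ * u1l) + (1/2) * ((1 - ν) * u0h + ν * u1h) > (1/2) * ((1 - μ) * u0h + μ * u1h) + (1/2) * ((1 - ν) * u0l + ν * u1l)) := by
  obtain ⟨hμ0, hμ1⟩ := hμ
  obtain ⟨hp0, hp1⟩ := hp
  have ha0 : 0 < (1 - μ) * (u0h - u0l) := by apply mul_pos <;> linarith
  have hb0 : 0 < μ * (u1h - u1l) := by apply mul_pos <;> linarith
  set a : ℝ := (1 - μ) * (u0h - u0l) with ha
  set b : ℝ := μ * (u1h - u1l) with hb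
  have hab : 0 < a + b := by linarith
  set q : ℝ := b / (a + b) with hq
  have hq0 : 0 < q := div_pos hb0 hab
  have hq1 : q < 1 := (div_lt_one hab).mpr (by linarith)
  have hqI : q ∈ Set.Icc (0:ℝ) 1 := ⟨le_of_lt hq0, le_of_lt hq1⟩
  have hpI : p ∈ Set.Icc (0:ℝ) 1 := ⟨le_of_lt hp0, le_of_lt hp1⟩
  have hqe : q * (a + b) = b := by
    rw [hq]; exact div_mul_cancel₀ b (ne_of_gt hab)
  have hqe' : (1 - q) * (a + b) = a := by
    have : (1 - q) * (a + b) = (a + b) - q * (a + b) := by ring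
    rw [this, hqe]; ring
  -- p must equal q
  have hpq : p = q := by
    by_contra hne
    have h1 := hproper q hqI p hpI hne
    have h2 := hopt q hqI
    have h3 : a * pi0 q + b * pi1 q ≤ a * pi0 p + b * pi1 p := by
      rw [ha, hb]; nlinarith [h2]
    have h4 : ((1 - q) * pi0 p + q * pi1 p) * (a + b) <
        ((1 - q) * pi0 q + q * pi1 q) * (a + b) :=
      mul_lt_mul_of_pos_right h1 hab
    have e1 : ((1 - q) * pi0 p + q * pi1 p) * (a + b) = a * pi0 p + b * pi1 p := by
      linear_combination pi0 p * hqe' + pi1 p * hqe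
    have e2 : ((1 - q) * pi0 q + q * pi1 q) * (a + b) = a * pi0 q + b * pi1 q := by
      linear_combination pi0 q * hqe' + pi1 q * hqe
    rw [e1, e2] at h4
    linarith
  subst hpq
  have hμν : 0 < μ - ν := by linarith
  have h1μ : 0 < 1 - μ := by linarith
  have hkey : (q > μ ↔ u0h - u0l < u1h - u1l) := by
    rw [gt_iff_lt, hq, lt_div_iff₀ hab, ha, hb]
    constructor <;> intro hx
    · nlinarith [mul_pos hμ0 h1μ]
    · nlinarith [mul_pos (mul_pos hμ0 h1μ) (sub_pos.mpr hx)]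
  have hkey2 : (q < μ ↔ u1h - u1l < u0h - u0l) := by
    rw [hq, div_lt_iff₀ hab, ha, hb]
    constructor <;> intro hx
    · nlinarith [mul_pos hμ0 h1μ]
    · nlinarith [mul_pos (mul_pos hμ0 h1μ) (sub_pos.mpr hx)]
  constructor
  · rw [hkey]
    constructor <;> intro hx
    · nlinarith [mul_pos hμν (sub_pos.mpr hx)]
    · nlinarith [hμν]
  · rw [hkey2]
    constructor <;> intro hx
    · nlinarith [mul_pos hμν (sub_pos.mpr hx)]
    · nlinarith [hμν]
end

section
/- (Risk-neutral analog of the identity, non-binarized scoring rules.) Let S0, S1 : [0,1] → ℝ be a proper scoring rule (for all q, r ∈ [0,1] with r ≠ q: (1−q)·S0(r) + q·S1(r) < (1−q)·S0(q) + q·S1(q)). Let the agent be risk-neutral with state-dependent linear utilities ui(x) = αi·x + βi at state θi, with α0, α1 > 0, and actual belief μ ∈ (0,1). If the report p ∈ (0,1) maximizes her expected utility W(r) = (1−μ)·(α0·S0(r) + β0) + μ·(α1·S1(r) + β1) over r ∈ [0,1], then p/(1−p) = (μ/(1−μ))·(α1/α0); in particular p > μ ⟺ α1 > α0, p < μ ⟺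 α1 < α0, and p = μ ⟺ α1 = α0. -/
open Filter Topology

theorem risk_neutral_identity
    (S0 S1 : ℝ → ℝ)
    (hproper : ∀ q ∈ Set.Icc (0:ℝ) 1, ∀ r ∈ Set.Icc (0:ℝ) 1, r ≠ q →
      (1 - q) * S0 r + q * S1 r < (1 - q) * S0 q + q * S1 q)
    (α0 α1 β0 β1 : ℝ) (hα0 : 0 < α0) (hα1 : 0 < α1)
    (μ : ℝ) (hμ : μ ∈ Set.Ioo (0:ℝ) 1)
    (p : ℝ) (hp : p ∈ Set.Ioo (0:ℝ) 1)
    (hopt : ∀ r ∈ Set.Icc (0:ℝ) 1,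
      (1 - μ) * (α0 * S0 r + β0) + μ * (α1 * S1 r + β1) ≤
      (1 - μ) * (α0 * S0 p + β0) + μ * (α1 * S1 p + β1))
    : p / (1 - p) = (μ / (1 - μ)) * (α1 / α0) ∧
      (p > μ ↔ α1 > α0) ∧ (p < μ ↔ α1 < α0) ∧ (p = μ ↔ α1 = α0) := by
  obtain ⟨hμ0, hμ1⟩ := hμ
  obtain ⟨hp0, hp1⟩ := hp
  set c : ℝ := (1 - μ) * α0 + μ * α1 with hc
  have hcpos : 0 < c := by
    have h1 : 0 < (1 - μ) * α0 := mul_pos (by linarith) hα0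
    have h2 : 0 < μ * α1 := mul_pos hμ0 hα1
    linarith
  set q : ℝ := μ * α1 / c with hqdef
  have hqc : q * c = μ * α1 := div_mul_cancel₀ _ (ne_of_gt hcpos)
  have h1qc : (1 - q) * c = (1 - μ) * α0 := by
    have : (1 - q) * c = c - q * c := by ring
    rw [this, hqc, hc]; ring
  have hq0 : 0 < q := div_pos (mul_pos hμ0 hα1) hcpos
  have hq1 : q < 1 := by
    rw [hqdef, div_lt_one hcpos, hc]
    nlinarith
  have hqmem : q ∈ Set.Icc (0:ℝ) 1 := ⟨le_of_lt hq0, le_of_lt hq1⟩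
  have hpq : p = q := by
    by_contra h
    have h2 := hproper q hqmem p ⟨le_of_lt hp0, le_of_lt hp1⟩ h
    have h3 := hopt q hqmem
    have h2' := mul_lt_mul_of_pos_right h2 hcpos
    have e1 : ((1 - q) * S0 p + q * S1 p) * c
        = (1 - μ) * α0 * S0 p + μ * α1 * S1 p := by
      linear_combination S0 p * h1qc + S1 p * hqc
    have e2 : ((1 - q) * S0 q + q * S1 q) * c
        = (1 - μ) * α0 * S0 q + μ * α1 * S1 q := by
      linear_combination S0 q * h1qc + S1 q * hqc
    nlinarith [h2', h3, e1, e2]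
  have hpc : p * c = μ * α1 := by rw [hpq]; exact hqc
  have hpc' : p * ((1 - μ) * α0 + μ * α1) = μ * α1 := by rw [← hc]; exact hpc
  have hdiff : (p - μ) * c = μ * (1 - μ) * (α1 - α0) := by
    rw [hc]; linear_combination hpc'
  have h1p : 0 < 1 - p := by linarith
  have h1μ : 0 < 1 - μ := by linarith
  have hμμ : 0 < μ * (1 - μ) := mul_pos hμ0 h1μ
  refine ⟨?_, ?_, ?_, ?_⟩
  · field_simp
    linear_combination hpc'
  · constructor <;> intro h
    · by_contra h'
      push_neg at h'
      have t1 : 0 < (p - μ) * c := mul_pos (by linarith) hcpos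
      have t2 : μ * (1 - μ) * (α1 - α0) ≤ 0 :=
        mul_nonpos_of_nonneg_of_nonpos hμμ.le (by linarith)
      linarith [hdiff]
    · by_contra h'
      push_neg at h'
      have t1 : (p - μ) * c ≤ 0 :=
        mul_nonpos_of_nonpos_of_nonneg (by linarith) hcpos.le
      have t2 : 0 < μ * (1 - μ) * (α1 - α0) := mul_pos hμμ (by linarith)
      linarith [hdiff]
  · constructor <;> intro h
    · by_contra h'
      push_neg at h'
      have t1 : (p - μ) * c < 0 :=
        mul_neg_of_neg_of_pos (by linarith) hcpos
      have t2 : 0 ≤ μ * (1 - μ) * (α1 - α0) :=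
        mul_nonneg hμμ.le (by linarith)
      linarith [hdiff]
    · by_contra h'
      push_neg at h'
      have t1 : 0 ≤ (p - μ) * c := mul_nonneg (by linarith) hcpos.le
      have t2 : μ * (1 - μ) * (α1 - α0) < 0 :=
        mul_neg_of_pos_of_neg hμμ (by linarith)
      linarith [hdiff]
  · constructor <;> intro h
    · have h0 : μ * (1 - μ) * (α1 - α0) = 0 := by rw [← hdiff, h]; ring
      rcases mul_eq_zero.mp h0 with h' | h'
      · exact absurd h' (ne_of_gt hμμ)
      · linarith
    · have h0 : (p - μ) * c = 0 := by rw [hdiff, h]; ring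
      rcases mul_eq_zero.mp h0 with h' | h'
      · linarith
      · exact absurd h' (ne_of_gt hcpos)
end

section
/- (Risk-neutral analog of Theorem 1.) Let S0, S1 : [0,1] → ℝ be a proper scoring rule, let the agent be risk-neutral with state-dependent linear utilities ui(x) = αi·x + βi (α0, α1 > 0), actual belief μ ∈ (0,1), and influenced belief μ̂ ∈ (0,1) with μ̂ > μ, and suppose the report p ∈ (0,1) maximizes W(r) over r ∈ [0,1]. Fix monetary payments x̲ < x̄ and define the lottery expected utilities EU(A), EU(B) with utilities ui. Then p > μ if and only if EU(A) > EU(B), and p < μ if and only if EU(A) < EU(B). -/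
open Filter Topology

theorem risk_neutral_theorem1
    (S0 S1 : ℝ → ℝ)
    (hproper : ∀ q ∈ Set.Icc (0:ℝ) 1, ∀ r ∈ Set.Icc (0:ℝ) 1, r ≠ q →
      (1 - q) * S0 r + q * S1 r < (1 - q) * S0 q + q * S1 q)
    (α0 α1 β0 β1 : ℝ) (hα0 : 0 < α0) (hα1 : 0 < α1)
    (μ : ℝ) (hμ : μ ∈ Set.Ioo (0:ℝ) 1)
    (ν : ℝ) (hν : ν ∈ Set.Ioo (0:ℝ) 1)
    (h : μ < ν)
    (p : ℝ) (hp : p ∈ Set.Ioo (0:ℝ) 1)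
    (hopt : ∀ r ∈ Set.Icc (0:ℝ) 1,
      (1 - μ) * (α0 * S0 r + β0) + μ * (α1 * S1 r + β1) ≤
      (1 - μ) * (α0 * S0 p + β0) + μ * (α1 * S1 p + β1))
    (xl xh : ℝ) (hx : xl < xh)
    : (p > μ ↔ (1/2) * ((1 - μ) * (α0 * xl + β0) + μ * (α1 * xl + β1)) + (1/2) * ((1 - ν) * (α0 * xh + β0) + ν * (α1 * xh + β1)) > (1/2) * ((1 - μ) * (α0 * xh + β0) + μ * (α1 * xh + β1)) + (1/2) * ((1 - ν) * (α0 * xl + β0) + ν * (α1 * xl + β1))) ∧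
      (p < μ ↔ (1/2) * ((1 - μ) * (α0 * xl + β0) + μ * (α1 * xl + β1)) + (1/2) * ((1 - ν) * (α0 * xh + β0) + ν * (α1 * xh + β1)) < (1/2) * ((1 - μ) * (α0 * xh + β0) + μ * (α1 * xh + β1)) + (1/2) * ((1 - ν) * (α0 * xl + β0) + ν * (α1 * xl + β1))) := by
  obtain ⟨hμ0, hμ1⟩ := hμ
  obtain ⟨hp0, hp1⟩ := hp
  set D := (1 - μ) * α0 + μ * α1 with hD
  have hDpos : 0 < D := by nlinarith
  set q := μ * α1 / D with hq
  have hq0 : 0 ≤ q := by positivity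
  have hq1 : q ≤ 1 := by
    rw [div_le_one hDpos]; nlinarith
  have h1q : 1 - q = (1 - μ) * α0 / D := by
    rw [hq, eq_div_iff hDpos.ne', sub_mul, div_mul_cancel₀ _ hDpos.ne', hD]
    ring
  have hkey : ∀ r, (1 - q) * S0 r + q * S1 r
      = ((1 - μ) * α0 * S0 r + μ * α1 * S1 r) / D := by
    intro r
    rw [h1q, hq]
    ring
  have hpq : p = q := by
    by_contra hne
    have h1 := hproper q ⟨hq0, hq1⟩ p ⟨hp0.le, hp1.le⟩ hne
    have h2 := hopt q ⟨hq0, hq1⟩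
    rw [hkey p, hkey q, div_lt_div_iff₀ hDpos hDpos] at h1
    nlinarith [h1, h2]
  have hiff : (q > μ ↔ α0 < α1) := by
    rw [hq, gt_iff_lt, lt_div_iff₀ hDpos]
    constructor
    · intro hlt
      by_contra hcon
      push_neg at hcon
      nlinarith [mul_le_mul_of_nonneg_left hcon (sub_pos.2 hμ1).le]
    · intro hlt
      nlinarith [mul_lt_mul_of_pos_left hlt (sub_pos.2 hμ1)]
  have hiff2 : (q < μ ↔ α1 < α0) := by
    rw [hq, div_lt_iff₀ hDpos]
    constructor
    · intro hlt
      by_contra hcon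
      push_neg at hcon
      nlinarith [mul_le_mul_of_nonneg_left hcon (sub_pos.2 hμ1).le]
    · intro hlt
      nlinarith [mul_lt_mul_of_pos_left hlt (sub_pos.2 hμ1)]
  subst hpq
  constructor
  · rw [hiff]
    constructor
    · intro hlt
      nlinarith [mul_pos (mul_pos (sub_pos.2 h) (sub_pos.2 hlt)) (sub_pos.2 hx)]
    · intro hlt
      by_contra hcon
      push_neg at hcon
      nlinarith [mul_nonneg (mul_nonneg (sub_pos.2 h).le (sub_nonneg.2 hcon)) (sub_pos.2 hx).le]
  · rw [hiff2]
    constructor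
    · intro hlt
      nlinarith [mul_pos (mul_pos (sub_pos.2 h) (sub_pos.2 hlt)) (sub_pos.2 hx)]
    · intro hlt
      by_contra hcon
      push_neg at hcon
      nlinarith [mul_nonneg (mul_nonneg (sub_pos.2 h).le (sub_nonneg.2 hcon)) (sub_pos.2 hx).le]
end
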